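/- Let ψ_1,…,ψ_N : ℝ^d → ℂ be measurable with Re ψ_j(ξ) ≤ 0 for all ξ and j and |ψ_j(ξ)| ≤ C(1 + |ξ|²) for some constant C > 0. Let h : ℝ^d → ℂ be a Schwartz function, and for t ∈ [0,∞)^N and x ∈ ℝ^d set w(t, x) = (2π)^{−d/2} ∫_{ℝ^d} e^{i⟨ξ,x⟩} exp(Σ_{j=1}^N t_j ψ_j(ξ)) ĥ(ξ) dξ. Then w(0, x) = h(x) and, for every i = 1,…,N and every t ∈ [0,∞)^N, the partial derivative of w in the variable t_i (one-sided at t_i = 0) exists and equals ∂w/∂t_i (t, x) = (2π)^{−d/2} ∫_{ℝ^d} e^{i⟨ξ,x⟩} ψ_i(ξ) exp(Σ_{j=1}^N t_j ψ_j(ξ)) ĥ(ξ) dξ. (Proposition 2.13 realized for the Feller semigroup of a multiparameter Lévy process: w solves the system ∂w/∂t_i = G_i w, w(0) = h, with G_i the pseudo-differential operator with symbol ψ_i.) -/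

import Mathlib

/-!
Mathlib's Fourier transform has kernel `e^{-2πi⟨v,w⟩}`, so `ĥ(ξ) = (2π)^{-d/2} 𝓕 h (ξ / 2π)`.
Hence `ĥ` is a Schwartz function, and `w(0, ·) = h` is Mathlib's inversion formula
`𝓕⁻ (𝓕 h) = h` after the substitution `ξ = 2π η`.

Along the variable `t_i`, `w(·, x)` has the form `r ↦ ∫ exp (r ψ_i + b) g` with
`Re ψ_i, Re b ≤ 0` and `g` integrable. For `r ≥ 0` the exponent stays in the closed left
half-plane, where `exp` is `1`-Lipschitz, so the difference quotients are dominated by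
`|ψ_i g| ≤ C (1 + |ξ|²) |ĥ|`, which is integrable because `ĥ` is Schwartz; dominated
convergence then gives the one-sided derivative.
-/

open MeasureTheory
open scoped RealInnerProductSpace

/-- The Fourier transform `ĥ(ξ) = (2π)^{-d/2} ∫ e^{-i⟨ξ,y⟩} h(y) dy`. -/
noncomputable def fourierT {d : ℕ} (h : EuclideanSpace ℝ (Fin d) → ℂ)
    (ξ : EuclideanSpace ℝ (Fin d)) : ℂ :=
  (((2 * Real.pi) ^ (-(d : ℝ) / 2) : ℝ) : ℂ) *
    ∫ y, Complex.exp (-Complex.I * (⟪ξ, y⟫ : ℂ)) * h y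

/-- The function `w(t,x) = (2π)^{-d/2} ∫ e^{i⟨ξ,x⟩} exp(∑_j t_j ψ_j(ξ)) ĥ(ξ) dξ`. -/
noncomputable def wFun {d N : ℕ} (ψ : Fin N → EuclideanSpace ℝ (Fin d) → ℂ)
    (h : EuclideanSpace ℝ (Fin d) → ℂ) (t : Fin N → ℝ)
    (x : EuclideanSpace ℝ (Fin d)) : ℂ :=
  (((2 * Real.pi) ^ (-(d : ℝ) / 2) : ℝ) : ℂ) *
    ∫ ξ, Complex.exp (Complex.I * (⟪ξ, x⟫ : ℂ)) *
      Complex.exp (∑ j, (t j : ℂ) * ψ j ξ) * fourierT h ξ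

open Complex Filter Set FourierTransform
open scoped Topology SchwartzMap

namespace Complex

theorem re_ofReal_mul_add_nonpos {r : ℝ} {a b : ℂ} (hr : 0 ≤ r) (ha : a.re ≤ 0) (hb : b.re ≤ 0) :
    ((r : ℂ) * a + b).re ≤ 0 := by
  simpa [re_ofReal_mul] using add_nonpos (mul_nonpos_of_nonneg_of_nonpos hr ha) hb

theorem norm_exp_sub_exp_le_of_re_nonpos {z w : ℂ} (hz : z.re ≤ 0) (hw : w.re ≤ 0) :
    ‖exp z - exp w‖ ≤ ‖z - w‖ := by
  have hbound : ∀ u ∈ {u : ℂ | u.re ≤ 0}, ‖exp u‖ ≤ 1 := fun u hu => by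
    rw [norm_exp]; exact Real.exp_le_one_iff.mpr hu
  simpa using (convex_halfSpace_re_le 0).norm_image_sub_le_of_norm_hasDerivWithin_le
    (fun u _ => (hasDerivAt_exp u).hasDerivWithinAt) hbound hw hz

theorem norm_exp_mul_add_sub_exp_mul_add_le {r s : ℝ} {a b : ℂ} (hr : 0 ≤ r) (hs : 0 ≤ s)
    (ha : a.re ≤ 0) (hb : b.re ≤ 0) :
    ‖exp (r * a + b) - exp (s * a + b)‖ ≤ |r - s| * ‖a‖ := by
  refine (norm_exp_sub_exp_le_of_re_nonpos (re_ofReal_mul_add_nonpos hr ha hb)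
    (re_ofReal_mul_add_nonpos hs ha hb)).trans_eq ?_
  rw [add_sub_add_right_eq_sub, ← sub_mul, ← ofReal_sub, norm_mul, norm_real, Real.norm_eq_abs]

end Complex

theorem hasDerivWithinAt_integral_cexp_mul_add {α : Type*} [MeasurableSpace α] {μ : Measure α}
    {a b g : α → ℂ} (ha : AEStronglyMeasurable a μ)
    (hb : AEStronglyMeasurable b μ) (ha_re : ∀ ξ, (a ξ).re ≤ 0) (hb_re : ∀ ξ, (b ξ).re ≤ 0)
    (hg : Integrable g μ) (hag : Integrable (fun ξ => a ξ * g ξ) μ) {s : ℝ} (hs : 0 ≤ s) :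
    HasDerivWithinAt (fun r : ℝ => ∫ ξ, exp (r * a ξ + b ξ) * g ξ ∂μ)
      (∫ ξ, a ξ * exp (s * a ξ + b ξ) * g ξ ∂μ) (Ici 0) s := by
  set F : ℝ → α → ℂ := fun r ξ => exp (r * a ξ + b ξ) * g ξ with hF
  have hmeas : ∀ r : ℝ, AEStronglyMeasurable (F r) μ := fun r =>
    (continuous_exp.comp_aestronglyMeasurable ((ha.const_mul (r : ℂ)).add hb)).mul hg.1
  have hint : ∀ r : ℝ, 0 ≤ r → Integrable (F r) μ := fun r hr =>
    hg.norm.mono' (hmeas r) (ae_of_all _ fun ξ => by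
      rw [hF, norm_mul, norm_exp]
      exact mul_le_of_le_one_left (norm_nonneg _)
        (Real.exp_le_one_iff.mpr (re_ofReal_mul_add_nonpos hr (ha_re ξ) (hb_re ξ))))
  have hslope : ∀ᶠ r in 𝓝[Ici 0 \ {s}] s,
      ∫ ξ, (r - s)⁻¹ • (F r ξ - F s ξ) ∂μ = slope (fun r => ∫ ξ, F r ξ ∂μ) s r := by
    filter_upwards [self_mem_nhdsWithin] with r hr
    rw [slope_def_module, integral_smul, integral_sub (hint r hr.1) (hint s hs)]
  rw [hasDerivWithinAt_iff_tendsto_slope]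
  refine (tendsto_integral_filter_of_dominated_convergence
    (F := fun r ξ => (r - s)⁻¹ • (F r ξ - F s ξ)) (fun ξ => ‖a ξ * g ξ‖)
    (Eventually.of_forall fun r => ((hmeas r).sub (hmeas s)).const_smul (r - s)⁻¹)
    ?_ hag.norm ?_).congr' hslope
  · filter_upwards [self_mem_nhdsWithin] with r ⟨hr, hrs⟩
    refine ae_of_all _ fun ξ => ?_
    have hrs_abs : |r - s| ≠ 0 := abs_ne_zero.mpr (sub_ne_zero.mpr hrs)
    calc ‖(r - s)⁻¹ • (F r ξ - F s ξ)‖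
        = |r - s|⁻¹ * (‖exp (r * a ξ + b ξ) - exp (s * a ξ + b ξ)‖ * ‖g ξ‖) := by
          rw [hF, norm_smul, ← sub_mul, norm_mul, norm_inv, Real.norm_eq_abs]
      _ ≤ |r - s|⁻¹ * ((|r - s| * ‖a ξ‖) * ‖g ξ‖) := by
          gcongr; exact norm_exp_mul_add_sub_exp_mul_add_le hr hs (ha_re ξ) (hb_re ξ)
      _ = ‖a ξ * g ξ‖ := by rw [norm_mul]; field_simp
  · refine ae_of_all _ fun ξ => ?_
    have hderiv : HasDerivAt (fun r : ℝ => F r ξ) (a ξ * exp (s * a ξ + b ξ) * g ξ) s := by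
      simpa [mul_comm (a ξ)] using
        ((((hasDerivAt_id s).ofReal_comp).mul_const (a ξ)).add_const (b ξ)).cexp.mul_const (g ξ)
    refine ((hasDerivAt_iff_tendsto_slope.mp hderiv).mono_left
      (nhdsWithin_mono _ (sdiff_subset_compl _ _))).congr fun r => ?_
    rw [slope_def_module]

theorem SchwartzMap.integrable_of_norm_le_quadratic_mul {V F W : Type*} [NormedAddCommGroup V]
    [NormedSpace ℝ V] [MeasurableSpace V] [BorelSpace V] [SecondCountableTopology V]
    [NormedAddCommGroup F] [NormedSpace ℝ F] {μ : Measure V} [μ.HasTemperateGrowth]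
    [NormedAddCommGroup W] (G : 𝓢(V, F)) {u : V → W} {C : ℝ} (hu : AEStronglyMeasurable u μ)
    (hle : ∀ ξ, ‖u ξ‖ ≤ C * (1 + ‖ξ‖ ^ 2) * ‖G ξ‖) : Integrable u μ :=
  ((G.integrable.norm.add (G.integrable_pow_mul μ 2)).const_mul C).mono' hu
    (ae_of_all _ fun ξ => (hle ξ).trans_eq (by simp only [Pi.add_apply]; ring))

section FourierT

variable {d : ℕ}

theorem fourierT_eq_fourier (f : EuclideanSpace ℝ (Fin d) → ℂ) (ξ : EuclideanSpace ℝ (Fin d)) :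
    fourierT f ξ = (((2 * Real.pi) ^ (-(d : ℝ) / 2) : ℝ) : ℂ) * 𝓕 f ((2 * Real.pi)⁻¹ • ξ) := by
  rw [fourierT, Real.fourier_eq']
  congr 2 with y
  rw [real_inner_smul_right, real_inner_comm, smul_eq_mul]
  congr 2
  push_cast
  field_simp

theorem SchwartzMap.exists_coe_eq_fourierT (h : 𝓢(EuclideanSpace ℝ (Fin d), ℂ)) :
    ∃ G : 𝓢(EuclideanSpace ℝ (Fin d), ℂ), ⇑G = fourierT (fun y => h y) := by
  have h2π : (2 * Real.pi)⁻¹ ≠ 0 := by positivity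
  let e := (LinearEquiv.smulOfNeZero ℝ (EuclideanSpace ℝ (Fin d)) _ h2π).toContinuousLinearEquiv
  refine ⟨(((2 * Real.pi) ^ (-(d : ℝ) / 2) : ℝ) : ℂ) •
    SchwartzMap.compCLMOfContinuousLinearEquiv ℝ e (𝓕 h), funext fun ξ => ?_⟩
  rw [fourierT_eq_fourier]
  rfl

theorem fourierT_inversion (h : 𝓢(EuclideanSpace ℝ (Fin d), ℂ)) (x : EuclideanSpace ℝ (Fin d)) :
    (((2 * Real.pi) ^ (-(d : ℝ) / 2) : ℝ) : ℂ) *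
      ∫ ξ, exp (I * (⟪ξ, x⟫ : ℂ)) * fourierT (fun y => h y) ξ = h x := by
  have h2π : 0 < 2 * Real.pi := by positivity
  have hc : (2 * Real.pi) ^ (-(d : ℝ) / 2) * (2 * Real.pi) ^ (-(d : ℝ) / 2) *
      (2 * Real.pi) ^ d = 1 := by
    rw [← Real.rpow_add h2π, ← Real.rpow_natCast, ← Real.rpow_add h2π]
    norm_num
  have hscale : ∫ ξ, exp (I * (⟪ξ, x⟫ : ℂ)) * 𝓕 (fun y => h y) ((2 * Real.pi)⁻¹ • ξ)
      = ((2 * Real.pi) ^ d : ℝ) • 𝓕⁻ (𝓕 (fun y => h y)) x := by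
    have hsub := Measure.integral_comp_inv_smul_of_nonneg volume
      (fun η => exp (↑(2 * Real.pi * ⟪η, x⟫) * I) • 𝓕 (fun y => h y) η) h2π.le
    rw [finrank_euclideanSpace_fin] at hsub
    rw [Real.fourierInv_eq', ← hsub]
    congr 1 with ξ
    rw [real_inner_smul_left, smul_eq_mul]
    push_cast
    field_simp
  simp_rw [fourierT_eq_fourier, mul_left_comm (exp _), integral_const_mul, hscale,
    h.continuous.fourierInv_fourier_eq h.integrable (𝓕 h).integrable, real_smul, ← mul_assoc]
  exact_mod_cast congrArg (fun r : ℝ => (r : ℂ) * h x) hc |>.trans (one_mul _)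

end FourierT

theorem Finset.sum_update_mul_eq_add_sum_erase {ι R : Type*} [Fintype ι] [DecidableEq ι]
    [CommRing R] [Algebra ℝ R] (t : ι → ℝ) (v : ι → R) (i : ι) (r : ℝ) :
    ∑ j, algebraMap ℝ R (Function.update t i r j) * v j
      = algebraMap ℝ R r * v i + ∑ j ∈ univ.erase i, algebraMap ℝ R (t j) * v j := by
  rw [← add_sum_erase _ _ (mem_univ i), Function.update_self]
  congr 1
  exact sum_congr rfl fun j hj => by rw [Function.update_of_ne (ne_of_mem_erase hj)]

theorem stmt_8_general {d N : ℕ}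
    (ψ : Fin N → EuclideanSpace ℝ (Fin d) → ℂ)
    (hψmeas : ∀ j, Measurable (ψ j))
    (hre : ∀ j ξ, (ψ j ξ).re ≤ 0)
    (C : ℝ)
    (hbound : ∀ j ξ, ‖ψ j ξ‖ ≤ C * (1 + ‖ξ‖ ^ 2))
    (h : SchwartzMap (EuclideanSpace ℝ (Fin d)) ℂ) :
    (∀ x, wFun ψ (fun y => h y) 0 x = h x) ∧
    ∀ (i : Fin N) (t : Fin N → ℝ), (∀ j, 0 ≤ t j) → ∀ x,
      HasDerivWithinAt (fun r : ℝ => wFun ψ (fun y => h y) (Function.update t i r) x)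
        ((((2 * Real.pi) ^ (-(d : ℝ) / 2) : ℝ) : ℂ) *
          ∫ ξ, Complex.exp (Complex.I * (⟪ξ, x⟫ : ℂ)) * ψ i ξ *
            Complex.exp (∑ j, (t j : ℂ) * ψ j ξ) * fourierT (fun y => h y) ξ)
        (Set.Ici 0) (t i) := by
  refine ⟨fun x => by simpa [wFun] using fourierT_inversion h x, fun i t ht x => ?_⟩
  obtain ⟨G, hG⟩ := SchwartzMap.exists_coe_eq_fourierT h
  set b : EuclideanSpace ℝ (Fin d) → ℂ := fun ξ => ∑ j ∈ Finset.univ.erase i, (t j : ℂ) * ψ j ξ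
  set g : EuclideanSpace ℝ (Fin d) → ℂ := fun ξ => exp (I * (⟪ξ, x⟫ : ℂ)) * G ξ
  have hsum : ∀ r ξ, ∑ j, (Function.update t i r j : ℂ) * ψ j ξ = r * ψ i ξ + b ξ := fun r ξ =>
    Finset.sum_update_mul_eq_add_sum_erase t (ψ · ξ) i r
  have hb_re : ∀ ξ, (b ξ).re ≤ 0 := fun ξ => by
    simp only [b, re_sum, re_ofReal_mul]
    exact Finset.sum_nonpos fun j _ => mul_nonpos_of_nonneg_of_nonpos (ht j) (hre j ξ)
  have hg_meas : AEStronglyMeasurable g := by fun_prop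
  have hg_norm : ∀ ξ, ‖g ξ‖ = ‖G ξ‖ := fun ξ => by simp [g, norm_exp]
  have hg : Integrable g := G.integrable.norm.mono' hg_meas (ae_of_all _ fun ξ => (hg_norm ξ).le)
  have hag : Integrable (fun ξ => ψ i ξ * g ξ) :=
    G.integrable_of_norm_le_quadratic_mul ((hψmeas i).aestronglyMeasurable.mul hg_meas)
      fun ξ => by rw [norm_mul, hg_norm]; gcongr; exact hbound i ξ
  have hb_meas : AEStronglyMeasurable b :=
    (Finset.measurable_sum _ fun j _ => measurable_const.mul (hψmeas j)).aestronglyMeasurable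
  have hw : (fun r : ℝ => wFun ψ (fun y => h y) (Function.update t i r) x) = fun r : ℝ =>
      (((2 * Real.pi) ^ (-(d : ℝ) / 2) : ℝ) : ℂ) * ∫ ξ, exp (r * ψ i ξ + b ξ) * g ξ := by
    funext r
    simp only [wFun, hsum, ← hG, g]
    congr 2 with ξ
    ring
  have hderiv : (∫ ξ, exp (I * (⟪ξ, x⟫ : ℂ)) * ψ i ξ * exp (∑ j, (t j : ℂ) * ψ j ξ) *
      fourierT (fun y => h y) ξ) = ∫ ξ, ψ i ξ * exp (t i * ψ i ξ + b ξ) * g ξ := by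
    simp only [← hsum, Function.update_eq_self, ← hG, g]
    congr 1 with ξ
    ring
  rw [hw, hderiv]
  exact (hasDerivWithinAt_integral_cexp_mul_add (hψmeas i).aestronglyMeasurable hb_meas (hre i)
    hb_re hg hag (ht i)).const_mul _

/-- Proposition 2.13 for the Feller semigroup of a multiparameter Lévy process:
`w(t,x)` satisfies `w(0,x) = h(x)` and `∂w/∂t_i = G_i w`, where `G_i` is the
pseudo-differential operator with symbol `ψ_i` (one-sided derivative at `t_i = 0`). -/
theorem stmt_8 {d N : ℕ}
    (ψ : Fin N → EuclideanSpace ℝ (Fin d) → ℂ)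
    (hψmeas : ∀ j, Measurable (ψ j))
    (hre : ∀ j ξ, (ψ j ξ).re ≤ 0)
    (C : ℝ) (hC : 0 < C)
    (hbound : ∀ j ξ, ‖ψ j ξ‖ ≤ C * (1 + ‖ξ‖ ^ 2))
    (h : SchwartzMap (EuclideanSpace ℝ (Fin d)) ℂ) :
    (∀ x, wFun ψ (fun y => h y) 0 x = h x) ∧
    ∀ (i : Fin N) (t : Fin N → ℝ), (∀ j, 0 ≤ t j) → ∀ x,
      HasDerivWithinAt (fun r : ℝ => wFun ψ (fun y => h y) (Function.update t i r) x)
        ((((2 * Real.pi) ^ (-(d : ℝ) / 2) : ℝ) : ℂ) *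
          ∫ ξ, Complex.exp (Complex.I * (⟪ξ, x⟫ : ℂ)) * ψ i ξ *
            Complex.exp (∑ j, (t j : ℂ) * ψ j ξ) * fourierT (fun y => h y) ξ)
        (Set.Ici 0) (t i) :=
  stmt_8_general ψ hψmeas hre C hbound h
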